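/- For each fixed (s,t) ∈ [0,T]²_⋆ and each 1 ≤ i,j ≤ d, almost surely Λ^{−,ij}(ε,δ;s,t) → W^{ij}(s,t) + H(2H−1)|t−s|^{2H−2} δ_{ij} as (ε,δ) ↓ 0 jointly, where Λ^{−,ij}(ε,δ;s,t) is the jointly measurable Gaussian-regression version of (1/(εδ)) E[B^{(i)}_{s,s+ε} B^{(j)}_{t,t+δ} | σ(B_s,B_t)]. -/

import Mathlib

open MeasureTheory ProbabilityTheory Real Filter Set Topology

noncomputable section

/-- Fractional Brownian motion covariance `R(s,t) = (t^{2H} + s^{2H} - |t-s|^{2H})/2`. -/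
def fbmR (H s t : ℝ) : ℝ := (t ^ (2*H) + s ^ (2*H) - |t - s| ^ (2*H)) / 2

/-- Variance `v(s) = s^{2H}`. -/
def fbmV (H s : ℝ) : ℝ := s ^ (2*H)

/-- `Θ_{s,t} = v(s)v(t) - R(s,t)²`. -/
def fbmTheta (H s t : ℝ) : ℝ := fbmV H s * fbmV H t - (fbmR H s t)^2

/-- `B` is a `d`-dimensional fractional Brownian motion with Hurst parameter `H` under `P`:
jointly measurable coordinates, and every finite linear combination of coordinates is a
centered Gaussian with the prescribed covariance `E[B^i_s B^j_t] = R(s,t) δ_{ij}`. -/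
structure IsFBM {Ω : Type*} [MeasurableSpace Ω] (P : Measure Ω) (H : ℝ) (d : ℕ)
    (B : Fin d → ℝ → Ω → ℝ) : Prop where
  isProb : IsProbabilityMeasure P
  meas : ∀ i, Measurable (Function.uncurry (B i))
  gaussian : ∀ (n : ℕ) (a : Fin n → ℝ) (i : Fin n → Fin d) (t : Fin n → ℝ),
      (∀ k, 0 ≤ t k) →
      P.map (fun ω => ∑ k, a k * B (i k) (t k) ω) =
        gaussianReal 0 (Real.toNNReal (∑ k, ∑ l,
          a k * a l * (if i k = i l then fbmR H (t k) (t l) else 0)))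

/-- `n₁₁(ε,s) = R(s,s+ε) − v(s)`. -/
def fbmN11 (H ε s : ℝ) : ℝ := fbmR H s (s+ε) - fbmV H s
/-- `n₁₂(ε,s,t) = R(s+ε,t) − R(s,t)`. -/
def fbmN12 (H ε s t : ℝ) : ℝ := fbmR H (s+ε) t - fbmR H s t
/-- `n₂₁(δ,s,t) = R(s,t+δ) − R(s,t)`. -/
def fbmN21 (H δ s t : ℝ) : ℝ := fbmR H s (t+δ) - fbmR H s t
/-- `n₂₂(δ,t) = R(t+δ,t) − v(t)`. -/
def fbmN22 (H δ t : ℝ) : ℝ := fbmR H (t+δ) t - fbmV H t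

/-- `λ₁₁(ε,s,t)`. -/
def lam11e (H ε s t : ℝ) : ℝ :=
  (fbmTheta H s t)⁻¹ * (fbmN11 H ε s * fbmV H t - fbmN12 H ε s t * fbmR H s t)
/-- `λ₁₂(ε,s,t)`. -/
def lam12e (H ε s t : ℝ) : ℝ :=
  (fbmTheta H s t)⁻¹ * (fbmN12 H ε s t * fbmV H s - fbmN11 H ε s * fbmR H s t)
/-- `λ₂₁(δ,s,t)`. -/
def lam21e (H δ s t : ℝ) : ℝ :=
  (fbmTheta H s t)⁻¹ * (fbmN21 H δ s t * fbmV H t - fbmN22 H δ t * fbmR H s t)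
/-- `λ₂₂(δ,s,t)`. -/
def lam22e (H δ s t : ℝ) : ℝ :=
  (fbmTheta H s t)⁻¹ * (fbmN22 H δ t * fbmV H s - fbmN21 H δ s t * fbmR H s t)

/-- `Z^{1;i}_{s,t}(ε) = λ₁₁(ε,s,t) B^i_s + λ₁₂(ε,s,t) B^i_t`. -/
def Z1 {Ω : Type*} {d : ℕ} (B : Fin d → ℝ → Ω → ℝ) (H : ℝ) (i : Fin d)
    (ε s t : ℝ) (ω : Ω) : ℝ :=
  lam11e H ε s t * B i s ω + lam12e H ε s t * B i t ω

/-- `Z^{2;j}_{s,t}(δ) = λ₂₁(δ,s,t) B^j_s + λ₂₂(δ,s,t) B^j_t`. -/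
def Z2 {Ω : Type*} {d : ℕ} (B : Fin d → ℝ → Ω → ℝ) (H : ℝ) (j : Fin d)
    (δ s t : ℝ) (ω : Ω) : ℝ :=
  lam21e H δ s t * B j s ω + lam22e H δ s t * B j t ω

/-- The jointly measurable version `Λ^{-,ij}(ε,δ;s,t)` of the projection operator. -/
def LambdaMinus {Ω : Type*} [MeasurableSpace Ω] (P : Measure Ω) {d : ℕ}
    (B : Fin d → ℝ → Ω → ℝ) (H : ℝ) (i j : Fin d) (ε δ s t : ℝ) (ω : Ω) : ℝ :=
  (Z1 B H i ε s t ω * Z2 B H j δ s t ω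
    - ∫ ω', Z1 B H i ε s t ω' * Z2 B H j δ s t ω' ∂P) / (ε*δ)
  + (∫ ω', (B i (s+ε) ω' - B i s ω') * (B j (t+δ) ω' - B j t ω') ∂P) / (ε*δ)

/-- `R_s(s,t) = H s^{2H−1} + H sgn(t−s)|t−s|^{2H−1}`. -/
def fbmRs (H s t : ℝ) : ℝ := H * s ^ (2*H-1) + H * Real.sign (t-s) * |t-s| ^ (2*H-1)
/-- `R_t(s,t) = H t^{2H−1} − H sgn(t−s)|t−s|^{2H−1}`. -/
def fbmRt (H s t : ℝ) : ℝ := H * t ^ (2*H-1) - H * Real.sign (t-s) * |t-s| ^ (2*H-1)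

/-- `λ₁₁(s,t)`. -/
def lam11 (H s t : ℝ) : ℝ :=
  (fbmTheta H s t)⁻¹ * (H * s ^ (2*H-1) * fbmV H t - fbmR H s t * fbmRs H s t)
/-- `λ₁₂(s,t)`. -/
def lam12 (H s t : ℝ) : ℝ :=
  (fbmTheta H s t)⁻¹ * (fbmRs H s t * fbmV H s - fbmR H s t * (H * s ^ (2*H-1)))
/-- `λ₂₁(s,t)`. -/
def lam21 (H s t : ℝ) : ℝ :=
  (fbmTheta H s t)⁻¹ * (fbmRt H s t * fbmV H t - fbmR H s t * (H * t ^ (2*H-1)))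
/-- `λ₂₂(s,t)`. -/
def lam22 (H s t : ℝ) : ℝ :=
  (fbmTheta H s t)⁻¹ * (H * t ^ (2*H-1) * fbmV H s - fbmR H s t * fbmRt H s t)

/-- The random field `W^{ij}(s,t)`. -/
def Wfield {Ω : Type*} {d : ℕ} (B : Fin d → ℝ → Ω → ℝ) (H : ℝ) (i j : Fin d)
    (s t : ℝ) (ω : Ω) : ℝ :=
  lam11 H s t * lam21 H s t * (B i s ω * B j s ω - if i = j then fbmV H s else 0)
  + lam11 H s t * lam22 H s t * (B i s ω * B j t ω - if i = j then fbmR H s t else 0)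
  + lam12 H s t * lam21 H s t * (B i t ω * B j s ω - if i = j then fbmR H s t else 0)
  + lam12 H s t * lam22 H s t * (B i t ω * B j t ω - if i = j then fbmV H t else 0)

/-- `Λ(s,t) = W(s,t) + H(2H−1)|t−s|^{2H−2} I_{d×d}`. -/
def LambdaField {Ω : Type*} {d : ℕ} (B : Fin d → ℝ → Ω → ℝ) (H : ℝ) (i j : Fin d)
    (s t : ℝ) (ω : Ω) : ℝ :=
  Wfield B H i j s t ω + if i = j then H * (2*H-1) * |t-s| ^ (2*H-2) else 0

/-- Frobenius norm on `ℝ^{d×d}`. -/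
def frobNorm {d : ℕ} (M : Fin d → Fin d → ℝ) : ℝ := Real.sqrt (∑ i, ∑ j, (M i j)^2)

end

/-!
Because `Z^{1;i}(ε)` and `Z^{2;j}(δ)` are linear in `(B_s, B_t)` and `E[B^i_a B^j_b] = δᵢⱼ R(a,b)`,
`Λ^{-,ij}(ε,δ;s,t)` is, for every `ω`, exactly `W^{ij}(s,t)` with each coefficient `λ_{kl}(s,t)`
replaced by `λ_{kl}(ε,s,t)/ε` or `λ_{kl}(δ,s,t)/δ`, plus `δᵢⱼ` times the rectangular increment
`R(s+ε,t+δ) - R(s+ε,t) - R(s,t+δ) + R(s,t)` divided by `εδ`. The rescaled coefficients are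
difference quotients of `R`, so they converge to the `λ_{kl}(s,t)`. In the rectangular increment
the terms `s^{2H}`, `t^{2H}` cancel and what is left is a mixed second difference of
`x ↦ |x|^{2H}` at `x = t - s ≠ 0`; two applications of the mean value theorem turn it into
`εδ · 2H(2H-1)|η|^{2H-2}` with `η` close to `t - s`. So the convergence holds for every `ω`.
-/

theorem exists_mixedDifference_eq_mul {f f' f'' : ℝ → ℝ} {u ε δ : ℝ} (hε : 0 < ε) (hδ : 0 < δ)
    (hf : ∀ x ∈ Icc (u - ε) (u + δ), HasDerivAt f (f' x) x)
    (hf' : ∀ x ∈ Icc (u - ε) (u + δ), HasDerivAt f' (f'' x) x) :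
    ∃ η ∈ Ioo (u - ε) (u + δ),
      f (u + δ) - f u - f (u + δ - ε) + f (u - ε) = ε * δ * f'' η := by
  have hg : ∀ x ∈ Icc (u - ε) u,
      HasDerivAt (fun y => f (y + δ) - f y) (f' (x + δ) - f' x) x := fun x hx =>
    ((hf (x + δ) ⟨by linarith [hx.1], by linarith [hx.2]⟩).comp_add_const x δ).sub
      (hf x ⟨hx.1, by linarith [hx.2]⟩)
  obtain ⟨ξ, hξ, hξeq⟩ := exists_hasDerivAt_eq_slope _ _ (by linarith : u - ε < u)
    (fun x hx => (hg x hx).continuousAt.continuousWithinAt)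
    (fun x hx => hg x (Ioo_subset_Icc_self hx))
  have hf'' : ∀ x ∈ Icc ξ (ξ + δ), HasDerivAt f' (f'' x) x := fun x hx =>
    hf' x ⟨by linarith [hξ.1, hx.1], by linarith [hξ.2, hx.2]⟩
  obtain ⟨η, hη, hηeq⟩ := exists_hasDerivAt_eq_slope f' f'' (by linarith : ξ < ξ + δ)
    (fun x hx => (hf'' x hx).continuousAt.continuousWithinAt)
    (fun x hx => hf'' x (Ioo_subset_Icc_self hx))
  refine ⟨η, ⟨by linarith [hξ.1, hη.1], by linarith [hξ.2, hη.2]⟩, ?_⟩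
  rw [add_sub_cancel_left] at hηeq
  rw [sub_sub_cancel, show u - ε + δ = u + δ - ε by ring] at hξeq
  rw [hηeq, hξeq]
  field_simp
  ring

theorem tendsto_mixedDifference_div {f f' f'' : ℝ → ℝ} {u : ℝ}
    (hf : ∀ᶠ x in 𝓝 u, HasDerivAt f (f' x) x) (hf' : ∀ᶠ x in 𝓝 u, HasDerivAt f' (f'' x) x)
    (hc : ContinuousAt f'' u) :
    Tendsto (fun ed : ℝ × ℝ =>
        (f (u + ed.2) - f u - f (u + ed.2 - ed.1) + f (u - ed.1)) / (ed.1 * ed.2))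
      (𝓝[>] 0 ×ˢ 𝓝[>] 0) (𝓝 (f'' u)) := by
  rw [Metric.tendsto_nhds]
  intro e he
  obtain ⟨r, hr, hball⟩ := Metric.eventually_nhds_iff_ball.1
    (hf.and (hf'.and (hc.eventually (Metric.ball_mem_nhds _ he))))
  have hI : Ioo (0 : ℝ) (r / 2) ∈ 𝓝[>] (0 : ℝ) := Ioo_mem_nhdsGT (by positivity)
  filter_upwards [prod_mem_prod hI hI] with ⟨ε, δ⟩ ⟨⟨hε, hε'⟩, hδ, hδ'⟩
  have hsub : Icc (u - ε) (u + δ) ⊆ Metric.ball u r := fun x hx => by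
    rw [Metric.mem_ball, dist_eq, abs_lt]
    constructor <;> linarith [hx.1, hx.2]
  obtain ⟨η, hη, heq⟩ := exists_mixedDifference_eq_mul hε hδ
    (fun x hx => (hball x (hsub hx)).1) (fun x hx => (hball x (hsub hx)).2.1)
  rw [heq, mul_div_cancel_left₀ _ (by positivity)]
  exact (hball η (hsub (Ioo_subset_Icc_self hη))).2.2

theorem hasDerivAt_abs_rpow_mul_self {q x : ℝ} (hx : x ≠ 0) :
    HasDerivAt (fun y : ℝ => |y| ^ q * y) ((q + 1) * |x| ^ q) x := by
  refine (((hasDerivAt_abs hx).rpow_const (p := q) (Or.inl (abs_ne_zero.2 hx))).mul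
    (hasDerivAt_id x)).congr_deriv ?_
  rw [Real.rpow_sub_one (abs_ne_zero.2 hx), id, mul_one]
  field_simp
  linear_combination q * sign_mul_self x

theorem tendsto_abs_rpow_mixedDifference_div {p u : ℝ} (hp : 1 < p) (hu : u ≠ 0) :
    Tendsto (fun ed : ℝ × ℝ =>
        (|u + ed.2| ^ p - |u| ^ p - |u + ed.2 - ed.1| ^ p + |u - ed.1| ^ p) / (ed.1 * ed.2))
      (𝓝[>] 0 ×ˢ 𝓝[>] 0) (𝓝 (p * (p - 1) * |u| ^ (p - 2))) := by
  refine tendsto_mixedDifference_div (f := fun x => |x| ^ p)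
    (f' := fun x => p * |x| ^ (p - 2) * x) (f'' := fun x => p * (p - 1) * |x| ^ (p - 2))
    (Eventually.of_forall fun x => hasDerivAt_abs_rpow x hp) ?_
    ((continuous_abs.continuousAt.rpow_const (Or.inl (abs_ne_zero.2 hu))).const_mul _)
  filter_upwards [isOpen_ne.mem_nhds hu] with x hx
  simp_rw [mul_assoc p]
  exact ((hasDerivAt_abs_rpow_mul_self hx).const_mul p).congr_deriv (by ring)

theorem Real.sign_mul_abs_rpow_sub_one {u : ℝ} (hu : u ≠ 0) (q : ℝ) :
    Real.sign u * |u| ^ (q - 1) = |u| ^ (q - 2) * u := by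
  have hsign : Real.sign u * |u| = u := by
    rcases hu.lt_or_gt with h | h
    · rw [Real.sign_of_neg h, abs_of_neg h, neg_one_mul, neg_neg]
    · rw [Real.sign_of_pos h, abs_of_pos h, one_mul]
  rw [show q - 1 = q - 2 + 1 by ring, Real.rpow_add_one (abs_ne_zero.2 hu), mul_left_comm, hsign]

theorem integral_sq_of_map_eq_gaussianReal {Ω : Type*} [MeasurableSpace Ω] {P : Measure Ω}
    {X : Ω → ℝ} (hX : AEMeasurable X P) {v : NNReal} (h : P.map X = gaussianReal 0 v) :
    ∫ ω, X ω ^ 2 ∂P = v := by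
  rw [← integral_map (f := fun x : ℝ => x ^ 2) hX (by fun_prop), h,
    ← variance_of_integral_eq_zero aemeasurable_id' integral_id_gaussianReal,
    variance_fun_id_gaussianReal]

theorem memLp_of_map_eq_gaussianReal {Ω : Type*} [MeasurableSpace Ω] {P : Measure Ω}
    {X : Ω → ℝ} (hX : AEMeasurable X P) {v : NNReal} (h : P.map X = gaussianReal 0 v) :
    MemLp X 2 P := by
  have : MemLp id 2 (P.map X) := h ▸ memLp_id_gaussianReal 2
  exact (memLp_map_measure_iff aestronglyMeasurable_id hX).1 this

theorem abs_sub_rpow_le_rpow_add_rpow {a b p : ℝ} (ha : 0 ≤ a) (hb : 0 ≤ b) (hp : 0 ≤ p) :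
    |b - a| ^ p ≤ a ^ p + b ^ p := by
  rcases le_total a b with h | h
  · rw [abs_of_nonneg (sub_nonneg.2 h)]
    linarith [Real.rpow_le_rpow (sub_nonneg.2 h) (sub_le_self b ha) hp, Real.rpow_nonneg ha p]
  · rw [abs_of_nonpos (sub_nonpos.2 h), neg_sub]
    linarith [Real.rpow_le_rpow (sub_nonneg.2 h) (sub_le_self a hb) hp, Real.rpow_nonneg hb p]

theorem fbmR_comm (H a b : ℝ) : fbmR H a b = fbmR H b a := by
  unfold fbmR; rw [abs_sub_comm]; ring

theorem fbmR_self {H : ℝ} (hH : 0 < H) (a : ℝ) : fbmR H a a = fbmV H a := by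
  rw [fbmR, fbmV, sub_self, abs_zero, Real.zero_rpow (by positivity)]
  ring

namespace IsFBM

variable {Ω : Type*} [MeasurableSpace Ω] {P : Measure Ω} {H : ℝ} {d : ℕ}
  {B : Fin d → ℝ → Ω → ℝ}

theorem measurable_apply (hB : IsFBM P H d B) (i : Fin d) (a : ℝ) : Measurable (B i a) :=
  (hB.meas i).comp measurable_prodMk_left

theorem map_apply (hB : IsFBM P H d B) (i : Fin d) {a : ℝ} (ha : 0 ≤ a) :
    P.map (B i a) = gaussianReal 0 (fbmR H a a).toNNReal := by
  simpa using hB.gaussian 1 ![1] ![i] ![a] (by simpa using ha)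

theorem map_add (hB : IsFBM P H d B) (i j : Fin d) {a b : ℝ} (ha : 0 ≤ a) (hb : 0 ≤ b) :
    P.map (fun ω => B i a ω + B j b ω) = gaussianReal 0
      (fbmR H a a + 2 * (if i = j then fbmR H a b else 0) + fbmR H b b).toNNReal := by
  have h := hB.gaussian 2 ![1, 1] ![i, j] ![a, b] (by simp [Fin.forall_fin_two, ha, hb])
  by_cases hij : i = j
  · subst hij
    simp only [Fin.sum_univ_two, if_true] at h ⊢
    simpa [fbmR_comm H b a, two_mul, add_assoc] using h
  · simp only [Fin.sum_univ_two] at h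
    simpa [hij, Ne.symm hij] using h

theorem memLp (hB : IsFBM P H d B) (i : Fin d) {a : ℝ} (ha : 0 ≤ a) : MemLp (B i a) 2 P :=
  memLp_of_map_eq_gaussianReal (hB.measurable_apply i a).aemeasurable (hB.map_apply i ha)

theorem integrable_mul (hB : IsFBM P H d B) (i j : Fin d) {a b : ℝ} (ha : 0 ≤ a) (hb : 0 ≤ b) :
    Integrable (fun ω => B i a ω * B j b ω) P :=
  (hB.memLp i ha).integrable_mul (hB.memLp j hb)

theorem integral_sq (hB : IsFBM P H d B) (hH : 0 < H) (i : Fin d) {a : ℝ} (ha : 0 ≤ a) :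
    ∫ ω, B i a ω ^ 2 ∂P = fbmR H a a := by
  rw [integral_sq_of_map_eq_gaussianReal (hB.measurable_apply i a).aemeasurable
    (hB.map_apply i ha), Real.coe_toNNReal _ (fbmR_self hH a ▸ Real.rpow_nonneg ha _)]

theorem integral_add_sq (hB : IsFBM P H d B) (hH : 0 < H) (i j : Fin d) {a b : ℝ} (ha : 0 ≤ a)
    (hb : 0 ≤ b) :
    ∫ ω, (B i a ω + B j b ω) ^ 2 ∂P =
      fbmR H a a + 2 * (if i = j then fbmR H a b else 0) + fbmR H b b := by
  have hmeas : AEMeasurable (fun ω => B i a ω + B j b ω) P :=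
    ((hB.measurable_apply i a).add (hB.measurable_apply j b)).aemeasurable
  refine (integral_sq_of_map_eq_gaussianReal hmeas (hB.map_add i j ha hb)).trans
    (Real.coe_toNNReal _ ?_)
  -- `IsFBM.gaussian` truncates the variance by `toNNReal`, so its sign has to be checked.
  have hpa := Real.rpow_nonneg ha (2 * H)
  have hpb := Real.rpow_nonneg hb (2 * H)
  rw [fbmR_self hH, fbmR_self hH, fbmV, fbmV]
  split_ifs
  · rw [fbmR]
    linarith [abs_sub_rpow_le_rpow_add_rpow ha hb (by linarith : 0 ≤ 2 * H)]
  · linarith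

theorem integral_mul (hB : IsFBM P H d B) (hH : 0 < H) (i j : Fin d) {a b : ℝ} (ha : 0 ≤ a)
    (hb : 0 ≤ b) :
    ∫ ω, B i a ω * B j b ω ∂P = if i = j then fbmR H a b else 0 := by
  have hpolar : (fun ω => B i a ω * B j b ω)
      = fun ω => ((B i a ω + B j b ω) ^ 2 - B i a ω ^ 2 - B j b ω ^ 2) / 2 := by
    ext ω; ring
  have hIa := (hB.memLp i ha).integrable_sq
  have hIb := (hB.memLp j hb).integrable_sq
  have hIsum : Integrable (fun ω => (B i a ω + B j b ω) ^ 2) P :=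
    ((hB.memLp i ha).add (hB.memLp j hb)).integrable_sq
  have hIdiff : Integrable (fun ω => (B i a ω + B j b ω) ^ 2 - B i a ω ^ 2) P := hIsum.sub hIa
  rw [hpolar, integral_div, integral_sub hIdiff hIb, integral_sub hIsum hIa,
    hB.integral_add_sq hH i j ha hb, hB.integral_sq hH i ha, hB.integral_sq hH j hb]
  ring

theorem integral_linComb_mul_linComb (hB : IsFBM P H d B) (hH : 0 < H) (i j : Fin d)
    {x y z w : ℝ} (hx : 0 ≤ x) (hy : 0 ≤ y) (hz : 0 ≤ z) (hw : 0 ≤ w) (a b c e : ℝ) :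
    ∫ ω, (a * B i x ω + b * B i y ω) * (c * B j z ω + e * B j w ω) ∂P =
      if i = j then
        a * c * fbmR H x z + a * e * fbmR H x w + b * c * fbmR H y z + b * e * fbmR H y w
      else 0 := by
  have hxz := hB.integrable_mul i j hx hz
  have hxw := hB.integrable_mul i j hx hw
  have hyz := hB.integrable_mul i j hy hz
  have hyw := hB.integrable_mul i j hy hw
  have hexpand : (fun ω => (a * B i x ω + b * B i y ω) * (c * B j z ω + e * B j w ω)) =
      fun ω => a * c * (B i x ω * B j z ω) + a * e * (B i x ω * B j w ω)
        + b * c * (B i y ω * B j z ω) + b * e * (B i y ω * B j w ω) := by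
    ext ω; ring
  rw [hexpand, integral_add (by fun_prop) (by fun_prop), integral_add (by fun_prop) (by fun_prop),
    integral_add (by fun_prop) (by fun_prop), integral_const_mul, integral_const_mul,
    integral_const_mul, integral_const_mul, hB.integral_mul hH i j hx hz,
    hB.integral_mul hH i j hx hw, hB.integral_mul hH i j hy hz, hB.integral_mul hH i j hy hw]
  split_ifs <;> ring

end IsFBM

noncomputable def fbmRect (H s t ε δ : ℝ) : ℝ :=
  fbmR H (s + ε) (t + δ) - fbmR H (s + ε) t - fbmR H s (t + δ) + fbmR H s t

-- `Wfield B H i j s t` is, definitionally, this with the coefficients `lam11 H s t`,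
-- `lam12 H s t`, `lam21 H s t`, `lam22 H s t`.
noncomputable def wfieldWith {Ω : Type*} {d : ℕ} (B : Fin d → ℝ → Ω → ℝ) (H : ℝ) (i j : Fin d)
    (s t a₁ a₂ b₁ b₂ : ℝ) (ω : Ω) : ℝ :=
  a₁ * b₁ * (B i s ω * B j s ω - if i = j then fbmV H s else 0)
  + a₁ * b₂ * (B i s ω * B j t ω - if i = j then fbmR H s t else 0)
  + a₂ * b₁ * (B i t ω * B j s ω - if i = j then fbmR H s t else 0)
  + a₂ * b₂ * (B i t ω * B j t ω - if i = j then fbmV H t else 0)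

theorem IsFBM.lambdaMinus_eq {Ω : Type*} [MeasurableSpace Ω] {P : Measure Ω} {H : ℝ} {d : ℕ}
    {B : Fin d → ℝ → Ω → ℝ} (hB : IsFBM P H d B) (hH : 0 < H) (i j : Fin d) {s t ε δ : ℝ}
    (hs : 0 ≤ s) (ht : 0 ≤ t) (hε : 0 ≤ ε) (hδ : 0 ≤ δ) (ω : Ω) :
    LambdaMinus P B H i j ε δ s t ω =
      wfieldWith B H i j s t (lam11e H ε s t / ε) (lam12e H ε s t / ε) (lam21e H δ s t / δ)
        (lam22e H δ s t / δ) ω + if i = j then fbmRect H s t ε δ / (ε * δ) else 0 := by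
  have hZ := hB.integral_linComb_mul_linComb hH i j hs ht hs ht
    (lam11e H ε s t) (lam12e H ε s t) (lam21e H δ s t) (lam22e H δ s t)
  have hI := hB.integral_linComb_mul_linComb hH i j (add_nonneg hs hε) hs (add_nonneg ht hδ) ht
    1 (-1) 1 (-1)
  simp only [one_mul, neg_one_mul, ← sub_eq_add_neg] at hI
  simp only [LambdaMinus, Z1, Z2, hZ, hI, wfieldWith, fbmRect]
  split_ifs
  · rw [fbmR_self hH, fbmR_self hH, fbmR_comm H t s]
    ring
  · ring

section Slopes

variable {H : ℝ}

theorem hasDerivAt_fbmR_right (hp : 1 < 2 * H) (x : ℝ) {y : ℝ} (hy : 0 < y) :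
    HasDerivAt (fun z => fbmR H x z) (H * y ^ (2 * H - 1) - H * |y - x| ^ (2 * H - 2) * (y - x))
      y := by
  have h1 := Real.hasDerivAt_rpow_const (x := y) (p := 2 * H) (Or.inl hy.ne')
  have h2 := (hasDerivAt_abs_rpow (y - x) hp).comp_sub_const y x
  exact (((h1.add_const (x ^ (2 * H))).sub h2).div_const 2).congr_deriv (by ring)

theorem tendsto_fbmR_slope_right (hp : 1 < 2 * H) (x : ℝ) {y : ℝ} (hy : 0 < y) :
    Tendsto (fun ε => (fbmR H x (y + ε) - fbmR H x y) / ε) (𝓝[>] 0)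
      (𝓝 (H * y ^ (2 * H - 1) - H * |y - x| ^ (2 * H - 2) * (y - x))) := by
  simpa only [smul_eq_mul, inv_mul_eq_div] using
    (hasDerivAt_fbmR_right hp x hy).tendsto_slope_zero_right

theorem tendsto_fbmN11_div (hp : 1 < 2 * H) {s : ℝ} (hs : 0 < s) :
    Tendsto (fun ε => fbmN11 H ε s / ε) (𝓝[>] 0) (𝓝 (H * s ^ (2 * H - 1))) := by
  simpa [fbmN11, fbmR_self (by linarith : 0 < H)] using tendsto_fbmR_slope_right hp s hs

theorem fbmN22_eq_fbmN11 (H δ t : ℝ) : fbmN22 H δ t = fbmN11 H δ t := by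
  rw [fbmN22, fbmN11, fbmR_comm]

theorem tendsto_fbmN12_div (hp : 1 < 2 * H) {s t : ℝ} (hs : 0 < s) (hst : s ≠ t) :
    Tendsto (fun ε => fbmN12 H ε s t / ε) (𝓝[>] 0) (𝓝 (fbmRs H s t)) := by
  have h := tendsto_fbmR_slope_right hp t hs
  rw [← neg_sub t s, abs_neg, mul_neg, sub_neg_eq_add, mul_assoc,
    ← Real.sign_mul_abs_rpow_sub_one (sub_ne_zero.2 hst.symm), ← mul_assoc] at h
  simpa only [fbmN12, fbmR_comm H _ t, fbmRs] using h

theorem tendsto_fbmN21_div (hp : 1 < 2 * H) {s t : ℝ} (ht : 0 < t) (hst : s ≠ t) :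
    Tendsto (fun δ => fbmN21 H δ s t / δ) (𝓝[>] 0) (𝓝 (fbmRt H s t)) := by
  have h := tendsto_fbmR_slope_right hp s ht
  rw [mul_assoc, ← Real.sign_mul_abs_rpow_sub_one (sub_ne_zero.2 hst.symm), ← mul_assoc] at h
  exact h

end Slopes

section Coefficients

variable {H : ℝ}

theorem tendsto_lam11e_div (hp : 1 < 2 * H) {s t : ℝ} (hs : 0 < s) (hst : s ≠ t) :
    Tendsto (fun ε => lam11e H ε s t / ε) (𝓝[>] 0) (𝓝 (lam11 H s t)) := by
  convert (((tendsto_fbmN11_div hp hs).mul_const (fbmV H t)).sub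
    ((tendsto_fbmN12_div hp hs hst).mul_const (fbmR H s t))).const_mul (fbmTheta H s t)⁻¹
    using 1
  · ext ε; rw [lam11e]; ring
  · rw [lam11]; congr 1; ring

theorem tendsto_lam12e_div (hp : 1 < 2 * H) {s t : ℝ} (hs : 0 < s) (hst : s ≠ t) :
    Tendsto (fun ε => lam12e H ε s t / ε) (𝓝[>] 0) (𝓝 (lam12 H s t)) := by
  convert (((tendsto_fbmN12_div hp hs hst).mul_const (fbmV H s)).sub
    ((tendsto_fbmN11_div hp hs).mul_const (fbmR H s t))).const_mul (fbmTheta H s t)⁻¹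
    using 1
  · ext ε; rw [lam12e]; ring
  · rw [lam12]; congr 1; ring

theorem tendsto_lam21e_div (hp : 1 < 2 * H) {s t : ℝ} (ht : 0 < t) (hst : s ≠ t) :
    Tendsto (fun δ => lam21e H δ s t / δ) (𝓝[>] 0) (𝓝 (lam21 H s t)) := by
  convert (((tendsto_fbmN21_div hp ht hst).mul_const (fbmV H t)).sub
    ((tendsto_fbmN11_div hp ht).mul_const (fbmR H s t))).const_mul (fbmTheta H s t)⁻¹
    using 1
  · ext δ; rw [lam21e, fbmN22_eq_fbmN11]; ring
  · rw [lam21]; congr 1; ring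

theorem tendsto_lam22e_div (hp : 1 < 2 * H) {s t : ℝ} (ht : 0 < t) (hst : s ≠ t) :
    Tendsto (fun δ => lam22e H δ s t / δ) (𝓝[>] 0) (𝓝 (lam22 H s t)) := by
  convert (((tendsto_fbmN11_div hp ht).mul_const (fbmV H s)).sub
    ((tendsto_fbmN21_div hp ht hst).mul_const (fbmR H s t))).const_mul (fbmTheta H s t)⁻¹
    using 1
  · ext δ; rw [lam22e, fbmN22_eq_fbmN11]; ring
  · rw [lam22]; congr 1; ring

end Coefficients

theorem tendsto_fbmRect_div {H s t : ℝ} (hp : 1 < 2 * H) (hst : s ≠ t) :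
    Tendsto (fun ed : ℝ × ℝ => fbmRect H s t ed.1 ed.2 / (ed.1 * ed.2)) (𝓝[>] 0 ×ˢ 𝓝[>] 0)
      (𝓝 (H * (2 * H - 1) * |t - s| ^ (2 * H - 2))) := by
  convert (tendsto_abs_rpow_mixedDifference_div hp (sub_ne_zero.2 hst.symm)).div_const 2
    using 1
  · ext ed
    simp only [fbmRect, fbmR]
    ring_nf
  · congr 1; ring

theorem tendsto_wfieldWith {Ω : Type*} {d : ℕ} (B : Fin d → ℝ → Ω → ℝ) (H : ℝ) (i j : Fin d)
    (s t : ℝ) (ω : Ω) {α : Type*} {l : Filter α} {f₁ f₂ g₁ g₂ : α → ℝ} {a₁ a₂ b₁ b₂ : ℝ}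
    (hf₁ : Tendsto f₁ l (𝓝 a₁)) (hf₂ : Tendsto f₂ l (𝓝 a₂)) (hg₁ : Tendsto g₁ l (𝓝 b₁))
    (hg₂ : Tendsto g₂ l (𝓝 b₂)) :
    Tendsto (fun x => wfieldWith B H i j s t (f₁ x) (f₂ x) (g₁ x) (g₂ x) ω) l
      (𝓝 (wfieldWith B H i j s t a₁ a₂ b₁ b₂ ω)) :=
  ((((hf₁.mul hg₁).mul_const _).add ((hf₁.mul hg₂).mul_const _)).add
    ((hf₂.mul hg₁).mul_const _)).add ((hf₂.mul hg₂).mul_const _)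

theorem statement4_general {Ω : Type*} [MeasurableSpace Ω] (P : Measure Ω)
    (H : ℝ) (hH : H ∈ Set.Ioo (1/2 : ℝ) 1) (d : ℕ)
    (B : Fin d → ℝ → Ω → ℝ) (hB : IsFBM P H d B)
    (s t : ℝ)
    (hst : s ≠ t) (hs0 : 0 < s) (ht0 : 0 < t) (i j : Fin d) :
    ∀ᵐ ω ∂P, Tendsto (fun ed : ℝ × ℝ => LambdaMinus P B H i j ed.1 ed.2 s t ω)
      ((𝓝[>] (0:ℝ)) ×ˢ (𝓝[>] (0:ℝ)))
      (𝓝 (Wfield B H i j s t ω + if i = j then H * (2*H-1) * |t-s| ^ (2*H-2) else 0)) := by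
  have hp : 1 < 2 * H := by linarith [hH.1]
  refine Eventually.of_forall fun ω => ?_
  have hW := tendsto_wfieldWith B H i j s t ω
    ((tendsto_lam11e_div hp hs0 hst).comp tendsto_fst)
    ((tendsto_lam12e_div hp hs0 hst).comp tendsto_fst)
    ((tendsto_lam21e_div hp ht0 hst).comp tendsto_snd)
    ((tendsto_lam22e_div hp ht0 hst).comp tendsto_snd)
  have hRect : Tendsto (fun ed : ℝ × ℝ => if i = j then fbmRect H s t ed.1 ed.2 / (ed.1 * ed.2)
      else 0) (𝓝[>] 0 ×ˢ 𝓝[>] 0) (𝓝 (if i = j then H * (2*H-1) * |t-s| ^ (2*H-2) else 0)) := by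
    split_ifs
    exacts [tendsto_fbmRect_div hp hst, tendsto_const_nhds]
  refine (hW.add hRect).congr' ?_
  filter_upwards [prod_mem_prod self_mem_nhdsWithin self_mem_nhdsWithin] with ed ⟨hε, hδ⟩
  exact (hB.lambdaMinus_eq (by linarith) i j hs0.le ht0.le (le_of_lt hε) (le_of_lt hδ) ω).symm

/-- For each fixed `(s,t) ∈ [0,T]²_⋆` and `1 ≤ i,j ≤ d`, almost surely
`Λ^{−,ij}(ε,δ;s,t) → W^{ij}(s,t) + H(2H−1)|t−s|^{2H−2} δ_{ij}` as `(ε,δ) ↓ 0` jointly. -/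
theorem statement4 {Ω : Type*} [MeasurableSpace Ω] (P : Measure Ω)
    (H : ℝ) (hH : H ∈ Set.Ioo (1/2 : ℝ) 1) (d : ℕ) (hd : 1 ≤ d)
    (T : ℝ) (hT : 0 < T) (B : Fin d → ℝ → Ω → ℝ) (hB : IsFBM P H d B)
    (s t : ℝ) (hs : s ∈ Set.Icc 0 T) (ht : t ∈ Set.Icc 0 T)
    (hst : s ≠ t) (hs0 : 0 < s) (ht0 : 0 < t) (i j : Fin d) :
    ∀ᵐ ω ∂P, Tendsto (fun ed : ℝ × ℝ => LambdaMinus P B H i j ed.1 ed.2 s t ω)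
      ((𝓝[>] (0:ℝ)) ×ˢ (𝓝[>] (0:ℝ)))
      (𝓝 (Wfield B H i j s t ω + if i = j then H * (2*H-1) * |t-s| ^ (2*H-2) else 0)) :=
  statement4_general P H hH d B hB s t hst hs0 ht0 i j
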